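/- arXiv:2501.09880 — 3 statements merged into one kernel-verified Lean document; each statement's English description precedes it below -/
import Mathlib

section
/- Let u : 𝕌 → (0, +∞) be a positive harmonic function on the open unit disc. Then for every z ∈ 𝕌, u(z)/u(0) ≤ (1+|z|²)/(1−|z|²) + (|∇u(0)|/u(0)) · |z|/(1−|z|²). -/
/-!
A positive harmonic `u` on the disc is the real part of a holomorphic `f` with `Re f > 0`, and
`|f'(0)| = |∇u(0)|`. The Cayley-type transform `h = (f - f(0)) / (f + conj (f(0)))` maps the disc
into itself with `h(0) = 0` and `|h'(0)| = |f'(0)| / (2 u(0))`. The Schwarz–Pick lemma applied to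
`h(z) / z` gives `|h(z)| ≤ |z| (|z| + |h'(0)|) / (1 + |h'(0)| |z|)`, and
`u(z) ≤ u(0) (1 + |h(z)|) / (1 - |h(z)|)` turns this into the bound.
-/

open Metric Set Filter Topology Complex ComplexConjugate InnerProductSpace

theorem harmonicOnNhd_of_fderiv_fderiv {u : ℂ → ℝ} {s : Set ℂ} (hs : IsOpen s)
    (hreg : ContDiffOn ℝ 2 u s)
    (hlap : ∀ z ∈ s, fderiv ℝ (fun w => fderiv ℝ u w 1) z 1 +
      fderiv ℝ (fun w => fderiv ℝ u w I) z I = 0) :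
    HarmonicOnNhd u s := by
  have hsecond : ∀ z ∈ s, ∀ v : ℂ,
      iteratedFDeriv ℝ 2 u z ![v, v] = fderiv ℝ (fun w => fderiv ℝ u w v) z v := by
    intro z hz v
    have hdiff : DifferentiableAt ℝ (fderiv ℝ u) z :=
      ((hreg.contDiffAt (hs.mem_nhds hz)).fderiv_right (m := 1) (by norm_num)).differentiableAt
        one_ne_zero
    rw [iteratedFDeriv_two_apply, fderiv_clm_apply hdiff (differentiableAt_const v)]
    simp
  refine fun z hz => ⟨hreg.contDiffAt (hs.mem_nhds hz), ?_⟩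
  filter_upwards [hs.mem_nhds hz] with w hw
  simp only [laplacian_eq_iteratedFDeriv_complexPlane, hsecond w hw, hlap w hw, Pi.zero_apply]

theorem HasDerivAt.hasGradientAt_re {F : ℂ → ℂ} {c x : ℂ} (h : HasDerivAt F c x) :
    HasGradientAt (fun z => (F z).re) (conj c) x := by
  have := reCLM.hasFDerivAt.comp x (h.hasFDerivAt.restrictScalars ℝ)
  refine this.congr_fderiv ?_
  ext v
  simp [Complex.inner]

namespace Complex

noncomputable def mobius (a w : ℂ) : ℂ := (w - a) / (1 - conj a * w)

lemma one_sub_conj_mul_ne_zero {a w : ℂ} (ha : ‖a‖ < 1) (hw : ‖w‖ ≤ 1) :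
    1 - conj a * w ≠ 0 := by
  intro h
  have : ‖conj a * w‖ < 1 := by
    rw [norm_mul, norm_conj]
    nlinarith [norm_nonneg a, norm_nonneg w]
  rw [← sub_eq_zero.mp h, norm_one] at this
  exact lt_irrefl _ this

lemma sq_norm_one_sub_conj_mul_sub_sq_norm_sub (a w : ℂ) :
    ‖1 - conj a * w‖ ^ 2 - ‖w - a‖ ^ 2 = (1 - ‖a‖ ^ 2) * (1 - ‖w‖ ^ 2) := by
  simp only [Complex.sq_norm, normSq_apply, sub_re, sub_im, mul_re, mul_im, conj_re, conj_im,
    one_re, one_im]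
  ring

lemma norm_sub_le_norm_one_sub_conj_mul {a w : ℂ} (ha : ‖a‖ ≤ 1) (hw : ‖w‖ ≤ 1) :
    ‖w - a‖ ≤ ‖1 - conj a * w‖ := by
  have key := sq_norm_one_sub_conj_mul_sub_sq_norm_sub a w
  have : 0 ≤ (1 - ‖a‖ ^ 2) * (1 - ‖w‖ ^ 2) := by
    apply mul_nonneg <;> nlinarith [norm_nonneg a, norm_nonneg w]
  exact (pow_le_pow_iff_left₀ (norm_nonneg _) (norm_nonneg _) two_ne_zero).mp (by linarith)

lemma norm_mobius_le_one {a w : ℂ} (ha : ‖a‖ < 1) (hw : ‖w‖ ≤ 1) : ‖mobius a w‖ ≤ 1 := by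
  rw [mobius, norm_div, div_le_one (norm_pos_iff.mpr (one_sub_conj_mul_ne_zero ha hw))]
  exact norm_sub_le_norm_one_sub_conj_mul ha.le hw

lemma norm_mul_one_add_le_of_norm_mobius_le {a w : ℂ} {r : ℝ} (ha : ‖a‖ < 1) (hw : ‖w‖ ≤ 1)
    (hr : r < 1) (h : ‖mobius a w‖ ≤ r) : ‖w‖ * (1 + ‖a‖ * r) ≤ ‖a‖ + r := by
  have hden := norm_pos_iff.mpr (one_sub_conj_mul_ne_zero ha hw)
  rw [mobius, norm_div, div_le_iff₀ hden] at h
  have hsq : ‖w - a‖ ^ 2 ≤ r ^ 2 * ‖1 - conj a * w‖ ^ 2 := by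
    rw [← mul_pow]; exact pow_le_pow_left₀ (norm_nonneg _) h 2
  have hre : (conj a * w).re ≤ ‖a‖ * ‖w‖ := by
    simpa [norm_mul] using re_le_norm (conj a * w)
  have e1 : ‖w - a‖ ^ 2 = ‖w‖ ^ 2 + ‖a‖ ^ 2 - 2 * (conj a * w).re := by
    simp only [Complex.sq_norm, normSq_apply, sub_re, sub_im, mul_re, conj_re, conj_im]
    ring
  have e2 : ‖1 - conj a * w‖ ^ 2 = 1 + ‖a‖ ^ 2 * ‖w‖ ^ 2 - 2 * (conj a * w).re := by
    rw [← mul_pow, ← norm_conj a, ← norm_mul]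
    simp only [Complex.sq_norm, normSq_apply, sub_re, sub_im, mul_re, mul_im, conj_re, conj_im,
      one_re, one_im]
    ring
  rw [e1, e2] at hsq
  have hr0 : 0 ≤ r := nonneg_of_mul_nonneg_left ((norm_nonneg _).trans h) hden
  have hs := norm_nonneg a
  have ht := norm_nonneg w
  -- `‖w‖` lies between the roots `(‖a‖ - r) / (1 - ‖a‖ r)` and `(‖a‖ + r) / (1 + ‖a‖ r)`.
  have hquad : ((1 + ‖a‖ * r) * ‖w‖ - (‖a‖ + r)) * ((1 - ‖a‖ * r) * ‖w‖ - (‖a‖ - r)) ≤ 0 := by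
    nlinarith [mul_nonneg (sub_nonneg.mpr hre) (by nlinarith : (0:ℝ) ≤ 1 - r ^ 2)]
  by_contra! hgt
  have hA : 0 < (1 + ‖a‖ * r) * ‖w‖ - (‖a‖ + r) := by linarith
  have hB : 0 < (1 - ‖a‖ * r) * ‖w‖ - (‖a‖ - r) := by
    refine pos_of_mul_pos_right (a := 1 + ‖a‖ * r) ?_ (by positivity)
    nlinarith [mul_nonneg hr0 (by nlinarith : (0:ℝ) ≤ 1 - ‖a‖ ^ 2),
      mul_pos (by nlinarith : (0:ℝ) < 1 - ‖a‖ * r) hA]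
  nlinarith [mul_pos hA hB]

/-- The Schwarz–Pick lemma at the origin. -/
lemma norm_mul_one_add_le_of_mapsTo_closedBall {ψ : ℂ → ℂ}
    (hd : DifferentiableOn ℂ ψ (ball 0 1)) (hmaps : MapsTo ψ (ball 0 1) (closedBall 0 1))
    {z : ℂ} (hz : z ∈ ball (0 : ℂ) 1) :
    ‖ψ z‖ * (1 + ‖ψ 0‖ * ‖z‖) ≤ ‖ψ 0‖ + ‖z‖ := by
  have hψ : ∀ w ∈ ball (0 : ℂ) 1, ‖ψ w‖ ≤ 1 := fun w hw => mem_closedBall_zero_iff.mp (hmaps hw)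
  have h0 : (0 : ℂ) ∈ ball (0 : ℂ) 1 := mem_ball_self one_pos
  rcases (hψ 0 h0).lt_or_eq with hc | hc
  · refine norm_mul_one_add_le_of_norm_mobius_le hc (hψ z hz) (mem_ball_zero_iff.mp hz) ?_
    have hΦd : DifferentiableOn ℂ (fun w => mobius (ψ 0) (ψ w)) (ball 0 1) :=
      (hd.sub_const _).div ((differentiableOn_const _).sub ((differentiableOn_const _).mul hd))
        fun w hw => one_sub_conj_mul_ne_zero hc (hψ w hw)
    have hΦ0 : mobius (ψ 0) (ψ 0) = 0 := by simp [mobius]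
    have hΦmaps : MapsTo (fun w => mobius (ψ 0) (ψ w)) (ball 0 1)
        (closedBall (mobius (ψ 0) (ψ 0)) 1) := fun w hw => by
      rw [hΦ0, mem_closedBall_zero_iff]; exact norm_mobius_le_one hc (hψ w hw)
    simpa [hΦ0] using dist_le_dist_of_mapsTo_ball hΦd hΦmaps hz
  · rw [hc]
    nlinarith [hψ z hz, norm_nonneg z]

lemma norm_mul_one_add_le_of_mapsTo_closedBall_of_map_zero {h : ℂ → ℂ}
    (hd : DifferentiableOn ℂ h (ball 0 1)) (hmaps : MapsTo h (ball 0 1) (closedBall 0 1))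
    (h0 : h 0 = 0) {z : ℂ} (hz : z ∈ ball (0 : ℂ) 1) :
    ‖h z‖ * (1 + ‖deriv h 0‖ * ‖z‖) ≤ ‖z‖ * (‖deriv h 0‖ + ‖z‖) := by
  have hψd : DifferentiableOn ℂ (dslope h 0) (ball 0 1) :=
    (differentiableOn_dslope (ball_mem_nhds _ one_pos)).mpr hd
  have hψmaps : MapsTo (dslope h 0) (ball 0 1) (closedBall 0 1) := fun w hw => by
    have hmaps' : MapsTo h (ball 0 1) (closedBall (h 0) 1) := by rwa [h0]
    simpa using norm_dslope_le_div_of_mapsTo_ball hd hmaps' hw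
  have hhz : h z = z * dslope h 0 z := by
    simpa [h0] using (sub_smul_dslope h 0 z).symm
  have key := norm_mul_one_add_le_of_mapsTo_closedBall hψd hψmaps hz
  rw [dslope_same] at key
  rw [hhz, norm_mul, mul_assoc]
  exact mul_le_mul_of_nonneg_left key (norm_nonneg z)

lemma sq_norm_add_conj_sub_sq_norm_sub (a b : ℂ) :
    ‖a + conj b‖ ^ 2 - ‖a - b‖ ^ 2 = 4 * a.re * b.re := by
  simp only [Complex.sq_norm, normSq_apply, add_re, add_im, sub_re, sub_im, conj_re, conj_im]
  ring

lemma norm_sub_le_norm_add_conj {a b : ℂ} (ha : 0 ≤ a.re) (hb : 0 ≤ b.re) :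
    ‖a - b‖ ≤ ‖a + conj b‖ := by
  have := sq_norm_add_conj_sub_sq_norm_sub a b
  exact (pow_le_pow_iff_left₀ (norm_nonneg _) (norm_nonneg _) two_ne_zero).mp
    (by nlinarith [mul_nonneg ha hb])

lemma re_mul_one_sub_norm_div_le {a b : ℂ} (ha : 0 < a.re) (hb : 0 < b.re) :
    a.re * (1 - ‖(a - b) / (a + conj b)‖) ≤ b.re * (1 + ‖(a - b) / (a + conj b)‖) := by
  have hP : 0 < ‖a + conj b‖ := by
    refine lt_of_lt_of_le ?_ (re_le_norm _)
    simp only [add_re, conj_re]; linarith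
  have hsq := sq_norm_add_conj_sub_sq_norm_sub a b
  have hsum : 2 * a.re ≤ ‖a + conj b‖ + ‖a - b‖ :=
    calc 2 * a.re = ((a + conj b) + (a - b)).re := by simp only [add_re, sub_re, conj_re]; ring
      _ ≤ ‖(a + conj b) + (a - b)‖ := re_le_norm _
      _ ≤ ‖a + conj b‖ + ‖a - b‖ := norm_add_le _ _
  have hM := norm_nonneg (a - b)
  -- with `P = ‖a + b̄‖`, `M = ‖a - b‖`: `(P - M)(P + M) = 4 Re a Re b` and `(P + M)² ≥ 4 (Re a)²`
  have key : a.re * (‖a + conj b‖ - ‖a - b‖) ≤ b.re * (‖a + conj b‖ + ‖a - b‖) := by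
    refine le_of_mul_le_mul_right ?_ (by linarith : 0 < ‖a + conj b‖ + ‖a - b‖)
    nlinarith [mul_le_mul hsum hsum (by linarith) (by linarith)]
  rw [norm_div]
  calc a.re * (1 - ‖a - b‖ / ‖a + conj b‖)
      = a.re * (‖a + conj b‖ - ‖a - b‖) / ‖a + conj b‖ := by field_simp
    _ ≤ b.re * (‖a + conj b‖ + ‖a - b‖) / ‖a + conj b‖ := by gcongr
    _ = b.re * (1 + ‖a - b‖ / ‖a + conj b‖) := by field_simp

theorem re_mul_one_sub_sq_le_of_re_pos {f : ℂ → ℂ} (hd : DifferentiableOn ℂ f (ball 0 1))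
    (hpos : ∀ w ∈ ball (0 : ℂ) 1, 0 < (f w).re) {z : ℂ} (hz : z ∈ ball (0 : ℂ) 1) :
    (f z).re * (1 - ‖z‖ ^ 2) ≤ (f 0).re * (1 + ‖z‖ ^ 2) + ‖deriv f 0‖ * ‖z‖ := by
  have h0 : (0 : ℂ) ∈ ball (0 : ℂ) 1 := mem_ball_self one_pos
  have hden : ∀ w ∈ ball (0 : ℂ) 1, f w + conj (f 0) ≠ 0 := fun w hw hzero => by
    have := congrArg re hzero
    simp only [add_re, conj_re, zero_re] at this
    linarith [hpos w hw, hpos 0 h0]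
  set h : ℂ → ℂ := fun w => (f w - f 0) / (f w + conj (f 0)) with h_def
  have hhd : DifferentiableOn ℂ h (ball 0 1) := (hd.sub_const _).div (hd.add_const _) hden
  have hmaps : MapsTo h (ball 0 1) (closedBall 0 1) := fun w hw => by
    rw [mem_closedBall_zero_iff, norm_div]
    exact div_le_one_of_le₀ (norm_sub_le_norm_add_conj (hpos w hw).le (hpos 0 h0).le)
      (norm_nonneg _)
  have hderiv : ‖deriv f 0‖ = 2 * (f 0).re * ‖deriv h 0‖ := by
    have hf0 : HasDerivAt f (deriv f 0) 0 :=
      (hd.differentiableAt (isOpen_ball.mem_nhds h0)).hasDerivAt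
    have hsum : f 0 + conj (f 0) = ((2 * (f 0).re : ℝ) : ℂ) := add_conj _
    have hh0 : HasDerivAt h _ 0 :=
      (hf0.sub_const (f 0)).fun_div (hf0.add_const (conj (f 0))) (hden 0 h0)
    rw [hh0.deriv, sub_self, zero_mul, sub_zero, sq, hsum, mul_div_mul_right _ _
      (by rw [← hsum]; exact hden 0 h0), norm_div, norm_real, Real.norm_of_nonneg
      (by linarith [hpos 0 h0])]
    field_simp [(hpos 0 h0).ne']
  have hschwarz := norm_mul_one_add_le_of_mapsTo_closedBall_of_map_zero hhd hmaps
    (by simp [h_def]) hz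
  have hcayley := re_mul_one_sub_norm_div_le (hpos z hz) (hpos 0 h0)
  simp only [h_def] at hschwarz
  set m := ‖(f z - f 0) / (f z + conj (f 0))‖
  set s := ‖deriv h 0‖
  have hs : 0 ≤ s * ‖z‖ := by positivity
  have hx := (hpos z hz).le
  calc (f z).re * (1 - ‖z‖ ^ 2) ≤ (f z).re * (1 - m) * (1 + s * ‖z‖) := by
        rw [mul_assoc]; gcongr; nlinarith
    _ ≤ (f 0).re * (1 + m) * (1 + s * ‖z‖) := by gcongr
    _ ≤ (f 0).re * (1 + ‖z‖ ^ 2 + 2 * s * ‖z‖) := by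
        rw [mul_assoc]; gcongr
        · exact (hpos 0 h0).le
        · nlinarith
    _ = (f 0).re * (1 + ‖z‖ ^ 2) + ‖deriv f 0‖ * ‖z‖ := by rw [hderiv]; ring

end Complex

/-- Strengthened Harnack inequality (upper bound) for positive harmonic
functions on the unit disc. -/
theorem strong_harnack_upper (u : ℂ → ℝ)
(hreg : ContDiffOn ℝ 2 u (Metric.ball (0:ℂ) 1))
    (hlap : ∀ z ∈ Metric.ball (0:ℂ) 1,
      fderiv ℝ (fun w => fderiv ℝ u w 1) z 1 +
      fderiv ℝ (fun w => fderiv ℝ u w Complex.I) z Complex.I = 0)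
    (hpos : ∀ z ∈ Metric.ball (0:ℂ) 1, 0 < u z)
    (z : ℂ) (hz : z ∈ Metric.ball (0:ℂ) 1) :
    u z / u 0 ≤ (1 + ‖z‖ ^ 2) / (1 - ‖z‖ ^ 2) +
      (‖gradient u 0‖ / u 0) * (‖z‖ / (1 - ‖z‖ ^ 2)) := by
  have h0 : (0 : ℂ) ∈ ball (0 : ℂ) 1 := mem_ball_self one_pos
  obtain ⟨F, hF, hFu⟩ :=
    (harmonicOnNhd_of_fderiv_fderiv isOpen_ball hreg hlap).exists_analyticOnNhd_ball_re_eq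
  have hre : ∀ w ∈ ball (0 : ℂ) 1, (F w).re = u w := hFu
  have hharnack := re_mul_one_sub_sq_le_of_re_pos hF.differentiableOn
    (fun w hw => hre w hw ▸ hpos w hw) hz
  rw [hre z hz, hre 0 h0] at hharnack
  have hgrad : ‖gradient u 0‖ = ‖deriv F 0‖ := by
    rw [← (eventuallyEq_of_mem (isOpen_ball.mem_nhds h0) hFu).gradient_eq,
      (hF 0 h0).differentiableAt.hasDerivAt.hasGradientAt_re.gradient, norm_conj]
  have hu0 := hpos 0 h0
  have hr : 0 < 1 - ‖z‖ ^ 2 := by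
    nlinarith [mem_ball_zero_iff.mp hz, norm_nonneg z]
  rw [hgrad, div_le_iff₀ hu0]
  field_simp
  linarith
end

section
/- (Harnack's inequality) Let u : 𝕌 → (0, +∞) be a positive harmonic function on the open unit disc. Then for every z ∈ 𝕌, (1−|z|)/(1+|z|) ≤ u(z)/u(0) ≤ (1+|z|)/(1−|z|). -/
/-!
A positive harmonic function `u` on the disc is the real part of a holomorphic `F` with
`0 < re F`. For `a = F 0` the map `(F - a) / (F + conj a)` sends the disc into itself and fixes
`0`, so Schwarz's lemma gives `‖F z - a‖ ≤ ‖z‖ * ‖F z + conj a‖`; comparing real parts in this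
inequality yields both Harnack bounds.
-/

open Complex Metric Set InnerProductSpace
open scoped ComplexConjugate Laplacian

theorem laplacian_eq_fderiv_apply_one_add_fderiv_apply_I {E : Type*} [NormedAddCommGroup E]
    [NormedSpace ℝ E] {u : ℂ → E} {z : ℂ} (hu : ContDiffAt ℝ 2 u z) :
    Δ u z = fderiv ℝ (fun w => fderiv ℝ u w 1) z 1 + fderiv ℝ (fun w => fderiv ℝ u w I) z I := by
  have hdiff : DifferentiableAt ℝ (fderiv ℝ u) z :=
    (hu.fderiv_right (by norm_num)).differentiableAt one_ne_zero
  simp only [laplacian_eq_iteratedFDeriv_complexPlane, iteratedFDeriv_two_apply]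
  rw [fderiv_clm_apply hdiff (differentiableAt_const _),
    fderiv_clm_apply hdiff (differentiableAt_const _)]
  simp

theorem harmonicOnNhd_of_fderiv_apply_one_add_fderiv_apply_I_eq_zero {E : Type*}
    [NormedAddCommGroup E] [NormedSpace ℝ E] {u : ℂ → E} {s : Set ℂ} (hs : IsOpen s)
    (hreg : ContDiffOn ℝ 2 u s)
    (hlap : ∀ z ∈ s, fderiv ℝ (fun w => fderiv ℝ u w 1) z 1 +
      fderiv ℝ (fun w => fderiv ℝ u w I) z I = 0) :
    HarmonicOnNhd u s := fun z hz =>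
  ⟨hreg.contDiffAt (hs.mem_nhds hz), by
    filter_upwards [hs.mem_nhds hz] with w hw
    rw [laplacian_eq_fderiv_apply_one_add_fderiv_apply_I (hreg.contDiffAt (hs.mem_nhds hw))]
    exact hlap w hw⟩

theorem norm_sub_lt_norm_add_conj {w a : ℂ} (hw : 0 < w.re) (ha : 0 < a.re) :
    ‖w - a‖ < ‖w + conj a‖ := by
  rw [← sq_lt_sq₀ (norm_nonneg _) (norm_nonneg _), Complex.sq_norm, Complex.sq_norm]
  simp only [normSq_apply, sub_re, sub_im, add_re, add_im, conj_re, conj_im]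
  nlinarith [mul_pos hw ha]

theorem re_div_re_bounds_of_norm_sub_le_mul_norm_add_conj {w a : ℂ} {r : ℝ} (hr₀ : 0 ≤ r)
    (hr₁ : r < 1) (hw : 0 < w.re) (ha : 0 < a.re) (h : ‖w - a‖ ≤ r * ‖w + conj a‖) :
    (1 - r) / (1 + r) ≤ w.re / a.re ∧ w.re / a.re ≤ (1 + r) / (1 - r) := by
  have hsq : (w.re - a.re) ^ 2 ≤ (r * (w.re + a.re)) ^ 2 := by
    -- both sides carry the same `(w.im - a.im) ^ 2`, which `r < 1` lets us drop
    have h2 := pow_le_pow_left₀ (norm_nonneg _) h 2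
    rw [mul_pow, Complex.sq_norm, Complex.sq_norm] at h2
    simp only [normSq_apply, sub_re, sub_im, add_re, add_im, conj_re, conj_im] at h2
    nlinarith [sq_nonneg (w.im - a.im), mul_le_mul_of_nonneg_left hr₁.le hr₀]
  obtain ⟨hlow, hup⟩ := abs_le.1 (abs_le_of_sq_le_sq hsq (by positivity))
  constructor
  · rw [div_le_div_iff₀ (by linarith) ha]
    linarith
  · rw [div_le_div_iff₀ ha (by linarith)]
    linarith

theorem harnack_re_of_differentiableOn_ball {F : ℂ → ℂ} (hF : DifferentiableOn ℂ F (ball 0 1))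
    (hpos : ∀ z ∈ ball (0:ℂ) 1, 0 < (F z).re) {z : ℂ} (hz : z ∈ ball (0:ℂ) 1) :
    (1 - ‖z‖) / (1 + ‖z‖) ≤ (F z).re / (F 0).re ∧
      (F z).re / (F 0).re ≤ (1 + ‖z‖) / (1 - ‖z‖) := by
  have h0 : (0:ℂ) ∈ ball (0:ℂ) 1 := mem_ball_self one_pos
  set a := F 0
  have hlt : ∀ w ∈ ball (0:ℂ) 1, ‖F w - a‖ < ‖F w + conj a‖ :=
    fun w hw => norm_sub_lt_norm_add_conj (hpos w hw) (hpos 0 h0)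
  have hschwarz : ‖(F z - a) / (F z + conj a)‖ ≤ ‖z‖ := by
    refine Complex.norm_le_norm_of_mapsTo_ball (f := fun w => (F w - a) / (F w + conj a))
      ?_ ?_ (by simp [a]) (mem_ball_zero_iff.1 hz)
    · exact (hF.sub_const a).div (hF.add_const _)
        fun w hw => norm_pos_iff.1 ((norm_nonneg _).trans_lt (hlt w hw))
    · intro w hw
      rw [mem_closedBall_zero_iff, norm_div]
      exact div_le_one_of_le₀ (hlt w hw).le (norm_nonneg _)
  rw [norm_div, div_le_iff₀ ((norm_nonneg _).trans_lt (hlt z hz))] at hschwarz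
  exact re_div_re_bounds_of_norm_sub_le_mul_norm_add_conj (norm_nonneg z)
    (mem_ball_zero_iff.1 hz) (hpos z hz) (hpos 0 h0) hschwarz

/-- Harnack's inequality for positive harmonic functions on the unit disc. -/
theorem harnack_inequality (u : ℂ → ℝ)
(hreg : ContDiffOn ℝ 2 u (Metric.ball (0:ℂ) 1))
    (hlap : ∀ z ∈ Metric.ball (0:ℂ) 1,
      fderiv ℝ (fun w => fderiv ℝ u w 1) z 1 +
      fderiv ℝ (fun w => fderiv ℝ u w Complex.I) z Complex.I = 0)
    (hpos : ∀ z ∈ Metric.ball (0:ℂ) 1, 0 < u z)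
    (z : ℂ) (hz : z ∈ Metric.ball (0:ℂ) 1) :
    (1 - ‖z‖) / (1 + ‖z‖) ≤ u z / u 0 ∧
      u z / u 0 ≤ (1 + ‖z‖) / (1 - ‖z‖) := by
  obtain ⟨F, hF, hFu⟩ :=
    (harmonicOnNhd_of_fderiv_apply_one_add_fderiv_apply_I_eq_zero isOpen_ball hreg
      hlap).exists_analyticOnNhd_ball_re_eq
  have hFu' : ∀ w ∈ ball (0:ℂ) 1, (F w).re = u w := fun w hw => hFu hw
  have h := harnack_re_of_differentiableOn_ball hF.differentiableOn
    (fun w hw => (hFu' w hw).symm ▸ hpos w hw) hz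
  rwa [hFu' z hz, hFu' 0 (mem_ball_self one_pos)] at h
end

section
/- Let f : 𝕌 → ℂ be a holomorphic bijection from the open unit disc 𝕌 onto the right half-plane 𝕂 = {z ∈ ℂ : Re z > 0} (a conformal isomorphism), and let u = Re f. Then for every z ∈ 𝕌, |∇u(z)| = 2u(z)/(1−|z|²). -/
/-!
Compose `f` with the Cayley transform `w ↦ (w - 1) / (w + 1)` to get a holomorphic bijection `g`
of the unit disc. The Schwarz–Pick lemma gives `|g'(z)| (1 - |z|²) ≤ 1 - |g(z)|²` for any
holomorphic self-map of the disc; applied also to the inverse of `g` (holomorphic, because an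
injective holomorphic map has nonvanishing derivative) it becomes an equality. Since `∇(Re f)` is
`conj f'`, unwinding the Cayley transform turns this equality into `|∇u| (1 - |z|²) = 2 u`.
-/

open Complex Metric Set Filter Function
open scoped Topology ComplexConjugate

theorem AnalyticAt.exists_eventuallyEq_pow {h : ℂ → ℂ} {a : ℂ} {n : ℕ} (hh : AnalyticAt ℂ h a)
    (hn : analyticOrderAt h a = n) (hn0 : n ≠ 0) :
    ∃ ρ : ℂ → ℂ, AnalyticAt ℂ ρ a ∧ ρ a = 0 ∧ deriv ρ a ≠ 0 ∧ h =ᶠ[𝓝 a] fun z => ρ z ^ n := by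
  obtain ⟨g, hg, hga, hhg⟩ := hh.analyticOrderAt_eq_natCast.mp hn
  obtain ⟨c, hc⟩ := IsAlgClosed.exists_pow_nat_eq (g a) (Nat.pos_of_ne_zero hn0)
  have hc0 : c ≠ 0 := by rintro rfl; exact hga (by rw [← hc, zero_pow hn0])
  -- the principal branch of `(g / g a) ^ (1 / n)` is analytic at `a`, where `g / g a = 1`
  set k : ℂ → ℂ := fun z => c * (g z / g a) ^ (n⁻¹ : ℂ)
  have hk : AnalyticAt ℂ k a :=
    analyticAt_const.mul ((hg.div analyticAt_const hga).cpow analyticAt_const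
      (by simp [div_self hga]))
  have hka : k a = c := by simp [k, div_self hga]
  refine ⟨fun z => (z - a) * k z, (analyticAt_id.sub analyticAt_const).mul hk, by simp, ?_, ?_⟩
  · have hd : HasDerivAt (fun z => (z - a) * k z) (1 * k a + (a - a) * deriv k a) a :=
      ((hasDerivAt_id a).sub_const a).mul hk.differentiableAt.hasDerivAt
    simpa [hd.deriv, hka] using hc0
  · filter_upwards [hhg] with z hz
    rw [hz, mul_pow, mul_pow, cpow_nat_inv_pow _ hn0, hc, mul_div_cancel₀ _ hga, smul_eq_mul]

theorem not_injOn_of_eventuallyEq_pow {h ρ : ℂ → ℂ} {a c : ℂ} {n : ℕ} {s : Set ℂ}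
    (hs : s ∈ 𝓝 a) (hρ : HasStrictDerivAt ρ c a) (hc : c ≠ 0) (hρa : ρ a = 0) (hn : 2 ≤ n)
    (hhρ : h =ᶠ[𝓝 a] fun z => ρ z ^ n) : ¬ InjOn h s := by
  intro hinj
  -- `ρ` is open at `a`, so some small `w ≠ 0` and `ζ w`, with `ζ ≠ 1` an `n`-th root of unity,
  -- are both values of `ρ`; their preimages then have the same image under `h`
  obtain ⟨ζ, hζ⟩ : ∃ ζ : ℂ, IsPrimitiveRoot ζ n := ⟨_, isPrimitiveRoot_exp n (by omega)⟩
  have himage : ρ '' {z ∈ s | h z = ρ z ^ n} ∈ 𝓝 0 := by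
    rw [← hρa, ← hρ.map_nhds_eq hc]
    exact image_mem_map (inter_mem hs hhρ)
  have hζimage : (ζ * ·) ⁻¹' (ρ '' {z ∈ s | h z = ρ z ^ n}) ∈ 𝓝 0 :=
    (continuous_const.mul continuous_id).continuousAt.preimage_mem_nhds (by simpa using himage)
  obtain ⟨w, ⟨⟨x, ⟨hxs, hx⟩, rfl⟩, ⟨y, ⟨hys, hy⟩, hyx⟩⟩, hw0⟩ := Filter.nonempty_of_mem
    (inter_mem (nhdsWithin_le_nhds (inter_mem himage hζimage)) self_mem_nhdsWithin :
      _ ∈ 𝓝[≠] (0 : ℂ))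
  have hxy : x = y := hinj hxs hys (by rw [hx, hy, hyx, mul_pow, hζ.pow_eq_one, one_mul])
  apply hζ.ne_one (by omega)
  refine mul_right_cancel₀ hw0 (?_ : ζ * ρ x = 1 * ρ x)
  subst hxy
  rw [one_mul]
  exact hyx.symm

theorem deriv_ne_zero_of_injOn {f : ℂ → ℂ} {s : Set ℂ} {a : ℂ} (hs : IsOpen s)
    (hf : DifferentiableOn ℂ f s) (hinj : InjOn f s) (ha : a ∈ s) : deriv f a ≠ 0 := by
  intro hfa
  have hA : AnalyticAt ℂ f a := hf.analyticAt (hs.mem_nhds ha)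
  have hinj' : InjOn (f · - f a) s := fun x hx y hy hxy => hinj hx hy (sub_left_inj.mp hxy)
  have horder : 2 ≤ analyticOrderAt (f · - f a) a := by
    have hd : analyticOrderAt (deriv f) a ≠ 0 := by
      simp [hA.deriv.analyticOrderAt_eq_zero, hfa]
    rw [← hA.analyticOrderAt_deriv_add_one]
    exact add_le_add_left (Order.one_le_iff_ne_zero.mpr hd) 1
  cases hn : analyticOrderAt (f · - f a) a with
  | top =>
    obtain ⟨z, hz, hza, hzs⟩ := ((analyticOrderAt_eq_top.mp hn).filter_mono nhdsWithin_le_nhds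
      |>.and (inter_mem_nhdsWithin _ (hs.mem_nhds ha))).exists (f := 𝓝[≠] a)
    exact hza (hinj' hzs ha (by simp [hz]))
  | coe n =>
    rw [hn] at horder
    obtain ⟨ρ, hρ, hρa, hρ', hfρ⟩ := (hA.sub analyticAt_const).exists_eventuallyEq_pow hn
      (by norm_cast at horder; omega)
    exact not_injOn_of_eventuallyEq_pow (hs.mem_nhds ha) hρ.hasStrictDerivAt hρ' hρa
      (by exact_mod_cast horder) hfρ hinj'

theorem hasStrictDerivAt_invFunOn {f : ℂ → ℂ} {s : Set ℂ} {a : ℂ} (hs : IsOpen s)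
    (hf : DifferentiableOn ℂ f s) (hinj : InjOn f s) (ha : a ∈ s) :
    HasStrictDerivAt (invFunOn f s) (deriv f a)⁻¹ (f a) := by
  have hfa : HasStrictDerivAt f (deriv f a) a :=
    (hf.analyticAt (hs.mem_nhds ha)).hasStrictDerivAt
  have hf' := deriv_ne_zero_of_injOn hs hf hinj ha
  have hmap := hfa.map_nhds_eq hf'
  have hinv : invFunOn f s (f a) = a := hinj.leftInvOn_invFunOn ha
  refine (show HasStrictDerivAt f (deriv f a) (invFunOn f s (f a)) by rwa [hinv])
    |>.of_local_left_inverse ?_ hf' ?_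
  · rw [ContinuousAt, hinv, ← hmap, tendsto_map'_iff]
    refine tendsto_id.congr' ?_
    filter_upwards [hs.mem_nhds ha] with x hx
    exact (hinj.leftInvOn_invFunOn hx).symm
  · rw [← hmap, eventually_map]
    filter_upwards [hs.mem_nhds ha] with x hx
    exact invFunOn_eq ⟨x, hx, rfl⟩

noncomputable def discMobius (p w : ℂ) : ℂ := (w + p) / (1 + conj p * w)

section discMobius

variable {p w : ℂ}

theorem sq_norm_one_add_conj_mul_sub_sq_norm_add (p w : ℂ) :
    ‖1 + conj p * w‖ ^ 2 - ‖w + p‖ ^ 2 = (1 - ‖p‖ ^ 2) * (1 - ‖w‖ ^ 2) := by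
  simp only [Complex.sq_norm, normSq_apply, add_re, add_im, mul_re, mul_im, one_re, one_im,
    conj_re, conj_im]
  ring

theorem one_add_conj_mul_ne_zero (hp : ‖p‖ < 1) (hw : ‖w‖ < 1) : 1 + conj p * w ≠ 0 := by
  intro h
  have : ‖conj p * w‖ = 1 := by rw [eq_neg_of_add_eq_zero_right h, norm_neg, norm_one]
  rw [norm_mul, norm_conj] at this
  nlinarith [norm_nonneg p, norm_nonneg w]

theorem mapsTo_discMobius (hp : ‖p‖ < 1) : MapsTo (discMobius p) (ball 0 1) (ball 0 1) := by
  intro w hw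
  rw [mem_ball_zero_iff] at hw ⊢
  have hden := one_add_conj_mul_ne_zero hp hw
  rw [discMobius, norm_div, div_lt_one (norm_pos_iff.mpr hden), ← sq_lt_sq₀ (norm_nonneg _)
    (norm_nonneg _), ← sub_pos, sq_norm_one_add_conj_mul_sub_sq_norm_add]
  exact mul_pos (by nlinarith [norm_nonneg p]) (by nlinarith [norm_nonneg w])

theorem hasDerivAt_discMobius (h : 1 + conj p * w ≠ 0) :
    HasDerivAt (discMobius p) ((1 - ‖p‖ ^ 2 : ℝ) / (1 + conj p * w) ^ 2) w := by
  have hnum : HasDerivAt (· + p) 1 w := (hasDerivAt_id w).add_const p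
  have hden : HasDerivAt (fun w => 1 + conj p * w) (conj p) w := by
    simpa using ((hasDerivAt_id w).const_mul (conj p)).const_add 1
  have hnum' : 1 * (1 + conj p * w) - (w + p) * conj p = ((1 - ‖p‖ ^ 2 : ℝ) : ℂ) := by
    push_cast
    rw [← conj_mul']
    ring
  rw [← hnum']
  exact hnum.div hden h

theorem differentiableOn_discMobius (hp : ‖p‖ < 1) :
    DifferentiableOn ℂ (discMobius p) (ball 0 1) := fun _w hw =>
  (hasDerivAt_discMobius (one_add_conj_mul_ne_zero hp (mem_ball_zero_iff.mp hw)))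
    |>.differentiableAt.differentiableWithinAt

@[simp] theorem discMobius_zero (p : ℂ) : discMobius p 0 = p := by simp [discMobius]

@[simp] theorem discMobius_neg_self (p : ℂ) : discMobius (-p) p = 0 := by simp [discMobius]

end discMobius

theorem norm_deriv_mul_one_sub_sq_le {g : ℂ → ℂ} (hd : DifferentiableOn ℂ g (ball 0 1))
    (hmaps : MapsTo g (ball 0 1) (ball 0 1)) {a : ℂ} (ha : a ∈ ball 0 1) :
    ‖deriv g a‖ * (1 - ‖a‖ ^ 2) ≤ 1 - ‖g a‖ ^ 2 := by
  set b := g a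
  have ha1 : ‖a‖ < 1 := mem_ball_zero_iff.mp ha
  have hb1 : ‖b‖ < 1 := mem_ball_zero_iff.mp (hmaps ha)
  have hb1' : ‖-b‖ < 1 := by rwa [norm_neg]
  -- conjugate `g` by disc automorphisms so that it fixes `0`, then apply the Schwarz lemma
  set F := discMobius (-b) ∘ g ∘ discMobius a
  have hF0 : F 0 = 0 := by simp [F, discMobius, b]
  have hFd : DifferentiableOn ℂ F (ball 0 1) :=
    (differentiableOn_discMobius hb1').comp (hd.comp (differentiableOn_discMobius ha1)
      (mapsTo_discMobius ha1)) (hmaps.comp (mapsTo_discMobius ha1))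
  have hFmaps : MapsTo F (ball 0 1) (closedBall (F 0) 1) := by
    rw [hF0]
    exact ((mapsTo_discMobius hb1').comp (hmaps.comp (mapsTo_discMobius ha1))).mono_right
      ball_subset_closedBall
  have hg' : HasDerivAt g (deriv g a) (discMobius a 0) := by
    rw [discMobius_zero]
    exact (hd.differentiableAt (isOpen_ball.mem_nhds ha)).hasDerivAt
  have hF' : HasDerivAt F _ 0 :=
    (hasDerivAt_discMobius (one_add_conj_mul_ne_zero hb1' hb1)).comp_of_eq 0
      (hg'.comp 0 (hasDerivAt_discMobius (p := a) (by simp))) (by simp [b])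
  have hschwarz := norm_deriv_le_one_of_mapsTo_ball hFd hFmaps one_pos
  rw [hF'.deriv] at hschwarz
  have hb2 : 0 < 1 - ‖b‖ ^ 2 := by nlinarith [norm_nonneg b]
  have hden : 1 + conj (-b) * b = ((1 - ‖b‖ ^ 2 : ℝ) : ℂ) := by
    push_cast
    rw [map_neg, neg_mul, conj_mul']
    ring
  rw [hden, norm_neg, mul_zero, add_zero, one_pow, div_one, norm_mul, norm_mul, norm_div,
    norm_pow, norm_real, norm_real, Real.norm_of_nonneg hb2.le,
    Real.norm_of_nonneg (by nlinarith [norm_nonneg a])] at hschwarz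
  rwa [sq (1 - ‖b‖ ^ 2), div_mul_cancel_left₀ hb2.ne', inv_mul_eq_div, div_le_one hb2] at hschwarz

theorem norm_deriv_mul_one_sub_sq_eq_of_bijOn {g : ℂ → ℂ} (hd : DifferentiableOn ℂ g (ball 0 1))
    (hbij : BijOn g (ball 0 1) (ball 0 1)) {a : ℂ} (ha : a ∈ ball 0 1) :
    ‖deriv g a‖ * (1 - ‖a‖ ^ 2) = 1 - ‖g a‖ ^ 2 := by
  set G := invFunOn g (ball 0 1)
  have hGd : DifferentiableOn ℂ G (ball 0 1) := by
    intro b hb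
    obtain ⟨x, hx, rfl⟩ := hbij.surjOn hb
    exact (hasStrictDerivAt_invFunOn isOpen_ball hd hbij.injOn hx).hasDerivAt.differentiableAt
      |>.differentiableWithinAt
  have hGa : G (g a) = a := hbij.injOn.leftInvOn_invFunOn ha
  have hle := norm_deriv_mul_one_sub_sq_le hGd hbij.surjOn.mapsTo_invFunOn (hbij.mapsTo ha)
  rw [(hasStrictDerivAt_invFunOn isOpen_ball hd hbij.injOn ha).hasDerivAt.deriv, hGa,
    norm_inv, inv_mul_le_iff₀ (norm_pos_iff.mpr (deriv_ne_zero_of_injOn isOpen_ball hd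
      hbij.injOn ha))] at hle
  exact le_antisymm (norm_deriv_mul_one_sub_sq_le hd hbij.mapsTo ha) hle

noncomputable def cayley (w : ℂ) : ℂ := (w - 1) / (w + 1)

section cayley

variable {w : ℂ}

theorem add_one_ne_zero_of_re_pos (hw : 0 < w.re) : w + 1 ≠ 0 := by
  intro h
  have := congrArg re h
  simp only [add_re, one_re, zero_re] at this
  linarith

theorem one_sub_sq_norm_cayley (hw : w + 1 ≠ 0) :
    1 - ‖cayley w‖ ^ 2 = 4 * w.re / ‖w + 1‖ ^ 2 := by
  have hw' : ‖w + 1‖ ^ 2 ≠ 0 := by positivity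
  rw [cayley, norm_div, div_pow, eq_div_iff hw', sub_mul, div_mul_cancel₀ _ hw', one_mul]
  simp only [Complex.sq_norm, normSq_apply, add_re, add_im, sub_re, sub_im, one_re, one_im]
  ring

theorem hasDerivAt_cayley (hw : w + 1 ≠ 0) : HasDerivAt cayley (2 / (w + 1) ^ 2) w := by
  have := ((hasDerivAt_id w).sub_const 1).div ((hasDerivAt_id w).add_const 1) hw
  rw [show 1 * (id w + 1) - (id w - 1) * 1 = (2 : ℂ) by simp; ring] at this
  exact this

theorem mapsTo_cayley : MapsTo cayley {w | 0 < w.re} (ball 0 1) := by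
  intro w hw
  rw [mem_ball_zero_iff, ← sq_lt_one_iff₀ (norm_nonneg _), ← sub_pos,
    one_sub_sq_norm_cayley (add_one_ne_zero_of_re_pos hw)]
  exact div_pos (mul_pos four_pos hw)
    (pow_pos (norm_pos_iff.mpr (add_one_ne_zero_of_re_pos hw)) 2)

theorem bijOn_cayley : BijOn cayley {w | 0 < w.re} (ball 0 1) := by
  have hv1 : ∀ v ∈ ball (0 : ℂ) 1, 1 - v ≠ 0 := fun v hv h => by
    simp [← sub_eq_zero.mp h] at hv
  have hright : ∀ v ∈ ball (0 : ℂ) 1, cayley ((1 + v) / (1 - v)) = v := fun v hv => by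
    have := hv1 v hv
    simp only [cayley]
    field_simp
    ring
  refine InvOn.bijOn ⟨fun w hw => ?_, hright⟩ mapsTo_cayley fun v hv => ?_
  · have := add_one_ne_zero_of_re_pos hw
    simp only [cayley]
    field_simp
    ring
  · have hw1 : (1 + v) / (1 - v) + 1 ≠ 0 := by
      rw [div_add_one (hv1 v hv)]
      exact div_ne_zero (by ring_nf; norm_num) (hv1 v hv)
    have h := one_sub_sq_norm_cayley hw1
    rw [hright v hv] at h
    have hpos : 0 < 4 * ((1 + v) / (1 - v)).re / ‖(1 + v) / (1 - v) + 1‖ ^ 2 := by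
      rw [← h, sub_pos, sq_lt_one_iff₀ (norm_nonneg v)]
      exact mem_ball_zero_iff.mp hv
    have := (div_pos_iff_of_pos_right (pow_pos (norm_pos_iff.mpr hw1) 2)).mp hpos
    show 0 < ((1 + v) / (1 - v)).re
    linarith

end cayley

theorem HasDerivAt.hasGradientAt_re_s6 {f : ℂ → ℂ} {f' z : ℂ} (hf : HasDerivAt f f' z) :
    HasGradientAt (fun w => (f w).re) (conj f') z := by
  have h := reCLM.hasFDerivAt.comp z (hf.hasFDerivAt.restrictScalars ℝ)
  have hdual : InnerProductSpace.toDual ℝ ℂ (conj f') =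
      reCLM.comp ((ContinuousLinearMap.toSpanSingleton ℂ f').restrictScalars ℝ) := by
    refine ContinuousLinearMap.ext fun v => ?_
    simp [InnerProductSpace.toDual_apply_apply, Complex.inner, mul_re]
  rw [HasGradientAt, HasGradientAtFilter, hdual]
  exact h

/-- If `u` is the real part of a conformal isomorphism from the unit disc onto
the right half-plane, then equality holds in the gradient estimate. -/
theorem gradient_eq_of_conformal_onto_halfplane (f : ℂ → ℂ) (u : ℂ → ℝ)
    (hf : DifferentiableOn ℂ f (Metric.ball (0:ℂ) 1))
    (hbij : Set.BijOn f (Metric.ball (0:ℂ) 1) {w : ℂ | 0 < w.re})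
    (hu : ∀ z : ℂ, u z = (f z).re)
    (z : ℂ) (hz : z ∈ Metric.ball (0:ℂ) 1) :
    ‖gradient u z‖ = 2 * u z / (1 - ‖z‖ ^ 2) := by
  have hfz : HasDerivAt f (deriv f z) z :=
    (hf.differentiableAt (isOpen_ball.mem_nhds hz)).hasDerivAt
  have hfz1 : f z + 1 ≠ 0 := add_one_ne_zero_of_re_pos (hbij.mapsTo hz)
  have hgd : DifferentiableOn ℂ (cayley ∘ f) (ball 0 1) := fun x hx =>
    (hasDerivAt_cayley (add_one_ne_zero_of_re_pos (hbij.mapsTo hx))).differentiableAt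
      |>.comp_differentiableWithinAt x (hf x hx)
  have hpick := norm_deriv_mul_one_sub_sq_eq_of_bijOn hgd (bijOn_cayley.comp hbij) hz
  rw [((hasDerivAt_cayley hfz1).comp z hfz).deriv, comp_apply, one_sub_sq_norm_cayley hfz1,
    norm_mul, norm_div, norm_pow] at hpick
  rw [show u = fun w => (f w).re from funext hu, hfz.hasGradientAt_re_s6.gradient, norm_conj]
  have hz2 : 0 < 1 - ‖z‖ ^ 2 := by
    have := mem_ball_zero_iff.mp hz
    nlinarith [norm_nonneg z]
  rw [eq_div_iff hz2.ne']
  field_simp at hpick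
  norm_num at hpick
  linarith
end
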